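/- Let p_sc(x) = (1/(2π))·√(4 − x²)·𝟙_{[−2,2]}(x) be the density of the semicircle distribution and let G(z) = ∫_ℝ (z−x)⁻¹ p_sc(x) dx be its Stieltjes transform, defined for z ∈ ℂ with Im z ≠ 0. Then G(z)² − z·G(z) + 1 = 0 for all such z. -/

import Mathlib

open MeasureTheory

/-- Density of the standard semicircle distribution. -/
noncomputable def psc (x : ℝ) : ℝ :=
  if x ∈ Set.Icc (-2 : ℝ) 2 then Real.sqrt (4 - x ^ 2) / (2 * Real.pi) else 0

/-!
The substitution `t = √((2 - x) / (2 + x))` (that is, `x = 2 cos θ` and `t = tan (θ / 2)`)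
turns `√(4 - x²) / (z - x)` into a rational function of `t`, so the integral has the elementary
primitive `-I w (z + 2) (log (t - I w) - log (t + I w)) + z arcsin (x / 2) - √(4 - x²)`, where
`w` is a square root of `(z - 2) / (z + 2)` with positive real part; such a root exists because
`Im z ≠ 0`. The boundary values give `2π G(z) = π (z - w (z + 2))`, and
`(w (z + 2))² = z² - 4` makes this a root of `G² - z G + 1`.
-/

open Complex Filter Topology Set

noncomputable def logRatio (a : ℂ) (t : ℝ) : ℂ := log (t - I * a) - log (t + I * a)

section logRatio

variable {a : ℂ}

lemma ofReal_sub_I_mul_mem_slitPlane (ha : 0 < a.re) (t : ℝ) : (t : ℂ) - I * a ∈ slitPlane :=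
  mem_slitPlane_iff.2 <| .inr <| by simpa using ha.ne'

lemma ofReal_add_I_mul_mem_slitPlane (ha : 0 < a.re) (t : ℝ) : (t : ℂ) + I * a ∈ slitPlane :=
  mem_slitPlane_iff.2 <| .inr <| by simpa using ha.ne'

lemma hasDerivAt_logRatio (ha : 0 < a.re) (t : ℝ) :
    HasDerivAt (logRatio a) (2 * I * a / (t ^ 2 + a ^ 2)) t := by
  have hsub := slitPlane_ne_zero (ofReal_sub_I_mul_mem_slitPlane ha t)
  have hadd := slitPlane_ne_zero (ofReal_add_I_mul_mem_slitPlane ha t)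
  have hfactor : (t : ℂ) ^ 2 + a ^ 2 = (t - I * a) * (t + I * a) := by
    linear_combination a ^ 2 * I_sq
  have hlog_sub := ((hasDerivAt_id t).ofReal_comp.sub_const (I * a)).clog_real
    (ofReal_sub_I_mul_mem_slitPlane ha t)
  have hlog_add := ((hasDerivAt_id t).ofReal_comp.add_const (I * a)).clog_real
    (ofReal_add_I_mul_mem_slitPlane ha t)
  refine (hlog_sub.sub hlog_add).congr_deriv ?_
  simp only [id, ofReal_one]
  rw [hfactor]
  field_simp
  ring

lemma continuous_logRatio (ha : 0 < a.re) : Continuous (logRatio a) :=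
  continuous_iff_continuousAt.2 fun t =>
    ((continuous_ofReal.sub continuous_const).continuousAt.clog
      (ofReal_sub_I_mul_mem_slitPlane ha t)).sub
    ((continuous_ofReal.add continuous_const).continuousAt.clog
      (ofReal_add_I_mul_mem_slitPlane ha t))

lemma logRatio_zero (ha : 0 < a.re) : logRatio a 0 = -(Real.pi * I) := by
  have him : 0 < (I * a).im := by simpa using ha
  rw [logRatio, ofReal_zero, zero_sub, zero_add, log, log, norm_neg,
    arg_neg_eq_arg_sub_pi_of_im_pos him]
  push_cast
  ring

lemma tendsto_logRatio_atTop (ha : 0 < a.re) : Tendsto (logRatio a) atTop (𝓝 0) := by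
  have hinv : Tendsto (fun t : ℝ => I * a * ((t : ℂ))⁻¹) atTop (𝓝 0) := by
    simpa using ((continuous_ofReal.tendsto 0).comp tendsto_inv_atTop_zero).const_mul (I * a)
  have hlog1 : ContinuousAt log 1 := continuousAt_clog one_mem_slitPlane
  have hone (u : ℝ → ℂ) (hu : Tendsto u atTop (𝓝 0)) :
      Tendsto (fun t => log (1 + u t)) atTop (𝓝 0) := by
    simpa [Function.comp_def] using
      hlog1.tendsto.comp (by simpa using (tendsto_const_nhds (x := (1 : ℂ))).add hu)
  have hlim := (hone _ (neg_zero (G := ℂ) ▸ hinv.neg)).sub (hone _ hinv)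
  rw [sub_zero] at hlim
  refine hlim.congr' ?_
  filter_upwards [eventually_gt_atTop 0] with t ht
  have hfactor (u : ℂ) (hu : (t : ℂ) + u ≠ 0) :
      log (t + u) = Real.log t + log (1 + u * (t : ℂ)⁻¹) := by
    have h : (t : ℂ) + u = t * (1 + u * (t : ℂ)⁻¹) := by
      field_simp [ofReal_ne_zero.2 ht.ne']
    rw [h, log_ofReal_mul ht (right_ne_zero_of_mul (h ▸ hu))]
  have hsub := hfactor (-(I * a)) (by
    simpa [← sub_eq_add_neg] using slitPlane_ne_zero (ofReal_sub_I_mul_mem_slitPlane ha t))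
  rw [← sub_eq_add_neg] at hsub
  rw [logRatio, hsub, hfactor _ (slitPlane_ne_zero (ofReal_add_I_mul_mem_slitPlane ha t)), neg_mul]
  ring

end logRatio

noncomputable def tanHalf (x : ℝ) : ℝ := √((2 - x) / (2 + x))

section tanHalf

variable {x : ℝ}

lemma tanHalf_two : tanHalf 2 = 0 := by norm_num [tanHalf]

lemma tanHalf_pos (hx : x ∈ Ioo (-2) 2) : 0 < tanHalf x :=
  Real.sqrt_pos.2 (div_pos (by linarith [hx.2]) (by linarith [hx.1]))

lemma tanHalf_sq_mul (hx : x ∈ Ioo (-2) 2) : tanHalf x ^ 2 * (2 + x) = 2 - x := by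
  have h2x : 2 + x ≠ 0 := by linarith [hx.1]
  rw [tanHalf, Real.sq_sqrt (div_nonneg (by linarith [hx.2]) (by linarith [hx.1])),
    div_mul_cancel₀ _ h2x]

lemma tanHalf_mul (hx : x ∈ Ioo (-2) 2) : tanHalf x * (2 + x) = √(4 - x ^ 2) := by
  have h2x : 0 < 2 + x := by linarith [hx.1]
  rw [← Real.sqrt_sq (mul_pos (tanHalf_pos hx) h2x).le, mul_pow, sq (2 + x), ← mul_assoc,
    tanHalf_sq_mul hx]
  ring_nf

lemma hasDerivAt_tanHalf (hx : x ∈ Ioo (-2) 2) :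
    HasDerivAt tanHalf (-2 / ((2 + x) * √(4 - x ^ 2))) x := by
  have h2x : 2 + x ≠ 0 := by linarith [hx.1]
  have hquot : HasDerivAt (fun y => (2 - y) / (2 + y)) (-4 / (2 + x) ^ 2) x :=
    (((hasDerivAt_id x).const_sub 2).div ((hasDerivAt_id x).const_add 2) h2x).congr_deriv
      (by simp only [id]; ring)
  have htan := tanHalf_pos hx
  refine (hquot.sqrt (div_pos (by linarith [hx.2]) (by linarith [hx.1])).ne').congr_deriv ?_
  rw [← tanHalf_mul hx]
  change -4 / (2 + x) ^ 2 / (2 * tanHalf x) = _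
  field_simp
  ring

lemma continuousAt_tanHalf_two : ContinuousAt tanHalf 2 :=
  ((continuous_const.sub continuous_id).continuousAt.div
    (continuous_const.add continuous_id).continuousAt (by norm_num)).sqrt

lemma tendsto_tanHalf_nhdsGT_neg_two : Tendsto tanHalf (𝓝[>] (-2)) atTop := by
  have hden : Tendsto (fun y : ℝ => 2 + y) (𝓝[>] (-2)) (𝓝[>] 0) := by
    simpa using (continuous_const_add (2 : ℝ)).continuousWithinAt (x := -2) |>.tendsto_nhdsWithin
      (s := Ioi (-2)) (t := Ioi 0) fun y (hy : -2 < y) => show 0 < 2 + y by linarith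
  have hnum : Tendsto (fun y : ℝ => 2 - y) (𝓝[>] (-2)) (𝓝 4) :=
    ((continuous_sub_left 2).tendsto' (-2) 4 (by norm_num)).mono_left nhdsWithin_le_nhds
  exact Real.tendsto_sqrt_atTop.comp <|
    (hnum.pos_mul_atTop (by norm_num) (tendsto_inv_nhdsGT_zero.comp hden)).congr fun y => by
      simp [div_eq_mul_inv]

lemma hasDerivAt_logRatio_tanHalf {a : ℂ} (ha : 0 < a.re) (hx : x ∈ Ioo (-2) 2) :
    HasDerivAt (fun y => logRatio a (tanHalf y))
      (-4 * I * a / ((2 - x + a ^ 2 * (2 + x)) * √(4 - x ^ 2))) x := by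
  refine ((hasDerivAt_logRatio ha _).scomp x (hasDerivAt_tanHalf hx)).congr_deriv ?_
  have h2x : (2 + x : ℂ) ≠ 0 := by exact_mod_cast (show 2 + x ≠ 0 by linarith [hx.1])
  have hs : (√(4 - x ^ 2) : ℂ) ≠ 0 := by
    exact_mod_cast (Real.sqrt_pos.2 (by nlinarith [hx.1, hx.2])).ne'
  have hden : (tanHalf x : ℂ) ^ 2 + a ^ 2 ≠ 0 := by
    rw [show (tanHalf x : ℂ) ^ 2 + a ^ 2 = (tanHalf x - I * a) * (tanHalf x + I * a) by
      linear_combination a ^ 2 * I_sq]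
    exact mul_ne_zero (slitPlane_ne_zero (ofReal_sub_I_mul_mem_slitPlane ha _))
      (slitPlane_ne_zero (ofReal_add_I_mul_mem_slitPlane ha _))
  have hsq : (tanHalf x : ℂ) ^ 2 * (2 + x) = 2 - x := by exact_mod_cast tanHalf_sq_mul hx
  have hden' : 2 - x + a ^ 2 * (2 + x) ≠ 0 := by
    rw [← hsq, ← add_mul]; exact mul_ne_zero hden h2x
  rw [real_smul]
  push_cast
  rw [div_mul_div_comm, div_eq_div_iff (mul_ne_zero (mul_ne_zero h2x hs) hden)
    (mul_ne_zero hden' hs)]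
  linear_combination (4 * I * a * √(4 - x ^ 2)) * hsq

lemma hasDerivAt_arcsin_half (hx : x ∈ Ioo (-2) 2) :
    HasDerivAt (fun y => Real.arcsin (y / 2)) (1 / √(4 - x ^ 2)) x := by
  have h := (Real.hasDerivAt_arcsin (by linarith [hx.1] : x / 2 ≠ -1)
    (by linarith [hx.2] : x / 2 ≠ 1)).comp x ((hasDerivAt_id x).div_const 2)
  refine h.congr_deriv ?_
  rw [show 1 - (x / 2) ^ 2 = (4 - x ^ 2) / 2 ^ 2 by ring,
    Real.sqrt_div' _ (by norm_num), Real.sqrt_sq (by norm_num)]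
  field_simp

lemma hasDerivAt_sqrt_four_sub_sq (hx : x ∈ Ioo (-2) 2) :
    HasDerivAt (fun y => √(4 - y ^ 2)) (-x / √(4 - x ^ 2)) x := by
  refine (((hasDerivAt_pow 2 x).const_sub 4).sqrt (by nlinarith [hx.1, hx.2])).congr_deriv ?_
  field_simp
  ring

end tanHalf

noncomputable def stieltjesPrimitive (z w : ℂ) (x : ℝ) : ℂ :=
  -I * (w * (z + 2)) * logRatio w (tanHalf x) + z * Real.arcsin (x / 2) - √(4 - x ^ 2)

section primitive

variable {z w : ℂ}

lemma ne_ofReal_of_mem_Icc (hw : 0 < w.re) (hwz : w ^ 2 * (z + 2) = z - 2) {x : ℝ}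
    (hx : x ∈ Icc (-2) 2) : z ≠ x := by
  rintro rfl
  have hre := congrArg re hwz
  have him := congrArg im hwz
  simp only [pow_two, mul_re, add_re, ofReal_re, re_ofNat, mul_im, add_im, ofReal_im, im_ofNat,
    add_zero, mul_zero, sub_zero, sub_re, zero_add, sub_im, sub_self, mul_eq_zero] at hre him
  rcases him with him | him
  · have hwim : w.im = 0 := by nlinarith
    rw [hwim] at hre
    have hx2 : x = 2 := by nlinarith [hx.1, hx.2, mul_self_nonneg w.re]
    rw [hx2] at hre
    nlinarith [mul_pos hw hw]
  · nlinarith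

lemma hasDerivAt_stieltjesPrimitive (hw : 0 < w.re) (hwz : w ^ 2 * (z + 2) = z - 2) {x : ℝ}
    (hx : x ∈ Ioo (-2) 2) :
    HasDerivAt (stieltjesPrimitive z w) ((z - x)⁻¹ * √(4 - x ^ 2)) x := by
  have h := (((hasDerivAt_logRatio_tanHalf hw hx).const_mul (-I * (w * (z + 2)))).add
    ((hasDerivAt_arcsin_half hx).ofReal_comp.const_mul z)).sub
    (hasDerivAt_sqrt_four_sub_sq hx).ofReal_comp
  refine h.congr_deriv ?_
  have hzx : z - x ≠ 0 := sub_ne_zero.2 (ne_ofReal_of_mem_Icc hw hwz (Ioo_subset_Icc_self hx))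
  have hs : (√(4 - x ^ 2) : ℂ) ≠ 0 := by
    exact_mod_cast (Real.sqrt_pos.2 (by nlinarith [hx.1, hx.2])).ne'
  have hs2 : (√(4 - x ^ 2) : ℂ) ^ 2 = 4 - x ^ 2 := by
    exact_mod_cast Real.sq_sqrt (by nlinarith [hx.1, hx.2] : (0 : ℝ) ≤ 4 - x ^ 2)
  have hD : (2 - x + w ^ 2 * (2 + x)) * (z + 2) = 4 * (z - x) := by
    linear_combination (2 + x) * hwz
  have hD0 : 2 - x + w ^ 2 * (2 + x) ≠ 0 :=
    left_ne_zero_of_mul (hD ▸ mul_ne_zero (by norm_num) hzx)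
  set D := 2 - x + w ^ 2 * (2 + x)
  have hfirst : -I * (w * (z + 2)) * (-4 * I * w / (D * √(4 - x ^ 2)))
      = -((z - 2) * (z + 2)) / ((z - x) * √(4 - x ^ 2)) := by
    rw [mul_div_assoc', div_eq_div_iff (mul_ne_zero hD0 hs) (mul_ne_zero hzx hs)]
    linear_combination (4 * w ^ 2 * (z + 2) * (z - x) * √(4 - x ^ 2)) * I_sq
      + (w ^ 2 * (z + 2) * √(4 - x ^ 2)) * hD - ((z + 2) * D * √(4 - x ^ 2)) * hwz
  push_cast
  rw [hfirst]
  field_simp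
  linear_combination -hs2

lemma stieltjesPrimitive_two (hw : 0 < w.re) :
    stieltjesPrimitive z w 2 = Real.pi / 2 * z - Real.pi * (w * (z + 2)) := by
  rw [stieltjesPrimitive, tanHalf_two, logRatio_zero hw, div_self two_ne_zero, Real.arcsin_one]
  norm_num
  linear_combination (Real.pi * (w * (z + 2))) * I_sq

lemma continuousAt_stieltjesPrimitive_two (hw : 0 < w.re) :
    ContinuousAt (stieltjesPrimitive z w) 2 := by
  unfold stieltjesPrimitive
  have := (continuous_logRatio hw).continuousAt.comp continuousAt_tanHalf_two
  fun_prop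

lemma tendsto_stieltjesPrimitive_neg_two (hw : 0 < w.re) :
    Tendsto (stieltjesPrimitive z w) (𝓝[>] (-2)) (𝓝 (-(Real.pi / 2) * z)) := by
  have hlog : Tendsto (fun x => -I * (w * (z + 2)) * logRatio w (tanHalf x))
      (𝓝[>] (-2)) (𝓝 0) := by
    simpa using ((tendsto_logRatio_atTop hw).comp tendsto_tanHalf_nhdsGT_neg_two).const_mul
      (-I * (w * (z + 2)))
  have hrest : ContinuousAt (fun x : ℝ => z * Real.arcsin (x / 2) - √(4 - x ^ 2)) (-2) := by
    fun_prop
  have := hlog.add (hrest.tendsto.mono_left nhdsWithin_le_nhds)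
  convert this using 2
  · simp only [stieltjesPrimitive]; ring
  · norm_num; ring

end primitive

theorem integral_sqrt_four_sub_sq_div_sub {z w : ℂ} (hw : 0 < w.re)
    (hwz : w ^ 2 * (z + 2) = z - 2) :
    ∫ x in (-2 : ℝ)..2, (z - x)⁻¹ * √(4 - x ^ 2) = Real.pi * (z - w * (z + 2)) := by
  have hcont : ContinuousOn (fun x : ℝ => (z - x)⁻¹ * √(4 - x ^ 2)) (uIcc (-2) 2) := by
    rw [uIcc_of_le (by norm_num)]
    refine ContinuousOn.mul (ContinuousOn.inv₀ (by fun_prop) fun x hx => ?_) (by fun_prop)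
    exact sub_ne_zero.2 (ne_ofReal_of_mem_Icc hw hwz hx)
  rw [intervalIntegral.integral_eq_sub_of_hasDerivAt_of_tendsto (by norm_num)
    (fun x hx => hasDerivAt_stieltjesPrimitive hw hwz hx) (hcont.intervalIntegrable)
    (tendsto_stieltjesPrimitive_neg_two hw)
    ((continuousAt_stieltjesPrimitive_two hw).continuousWithinAt.tendsto),
    stieltjesPrimitive_two hw]
  ring

lemma integral_mul_psc (f : ℝ → ℂ) :
    ∫ x, f x * psc x
      = (2 * Real.pi : ℂ)⁻¹ * ∫ x in (-2 : ℝ)..2, f x * √(4 - x ^ 2) := by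
  have hind : (fun x => f x * psc x)
      = (Icc (-2 : ℝ) 2).indicator
          fun x => (2 * Real.pi : ℂ)⁻¹ * (f x * √(4 - x ^ 2)) := by
    ext x
    by_cases hx : x ∈ Icc (-2 : ℝ) 2
    · simp only [psc, hx, if_true, indicator_of_mem]
      push_cast
      ring
    · simp [psc, hx]
  rw [hind, integral_indicator measurableSet_Icc, integral_Icc_eq_integral_Ioc,
    ← intervalIntegral.integral_of_le (by norm_num), intervalIntegral.integral_const_mul]

theorem integral_inv_sub_mul_psc {z w : ℂ} (hw : 0 < w.re) (hwz : w ^ 2 * (z + 2) = z - 2) :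
    ∫ x : ℝ, (z - x)⁻¹ * psc x = (z - w * (z + 2)) / 2 := by
  rw [integral_mul_psc, integral_sqrt_four_sub_sq_div_sub hw hwz]
  field_simp [Real.pi_ne_zero]

lemma exists_sq_mul_add_two_eq_sub_two {z : ℂ} (hz : z.im ≠ 0) :
    ∃ w : ℂ, 0 < w.re ∧ w ^ 2 * (z + 2) = z - 2 := by
  have hz2 : z + 2 ≠ 0 := fun h => hz (by simpa using congrArg im h)
  obtain ⟨u, hu⟩ := IsAlgClosed.exists_pow_nat_eq ((z - 2) / (z + 2)) two_pos
  rw [eq_div_iff hz2] at hu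
  have hure : u.re ≠ 0 := by
    intro h
    have him := congrArg im hu
    simp only [pow_two, mul_im, mul_re, h, add_re, add_im, sub_im, re_ofNat, im_ofNat] at him
    have : (1 + u.im * u.im) * z.im = 0 := by linear_combination -him
    exact hz ((mul_eq_zero.1 this).resolve_left (by nlinarith [mul_self_nonneg u.im]))
  rcases hure.lt_or_gt with hneg | hpos
  · exact ⟨-u, by simpa using hneg, by rwa [neg_sq]⟩
  · exact ⟨u, hpos, hu⟩

theorem stmt_6 (z : ℂ) (hz : z.im ≠ 0) :
    (∫ x : ℝ, (z - (x : ℂ))⁻¹ * (psc x : ℂ)) ^ 2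
      - z * (∫ x : ℝ, (z - (x : ℂ))⁻¹ * (psc x : ℂ)) + 1 = 0 := by
  obtain ⟨w, hw, hwz⟩ := exists_sq_mul_add_two_eq_sub_two hz
  rw [integral_inv_sub_mul_psc hw hwz]
  linear_combination (z + 2) / 4 * hwz
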